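/- arXiv:1407.6531 — 6 statements merged into one kernel-verified Lean document; each statement's English description precedes it below -/
import Mathlib

section
/- Let T be a tree whose vertices may be labelled with labels x and y (each vertex may receive one label, both, or none). Then exactly one of the following holds: (1) T contains two vertex-disjoint paths, each from a vertex with label x to a vertex with label y (paths of length 0 allowed); or (2) there exists a vertex v and two subtrees T_x and T_y of T with V(T_x) ∪ V(T_y) = V(T), V(T_x) ∩ V(T_y) = {v}, such that T_x contains all vertices with label x and T_y contains all vertices with label y. -/
/-!
If `Sx` and `Sy` are connected, cover the tree and meet only in `v`, then no edge joins
`Sx \ {v}` to `Sy \ {v}` (with the paths to `v` inside `Sx` and `Sy` it would close a cycle), so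
every path from an `x`-vertex to a `y`-vertex passes through `v` and no two of them are disjoint.

Conversely, if these paths meet pairwise, the Helly property of geodesics in a tree gives a vertex
`v` on all of them: fix a root `r`, take on each geodesic its vertex nearest to `r`, and among
these the one farthest from `r`. Then `Sy` is `v` together with the vertices joined to a
`y`-vertex by a walk avoiding `v`, and `Sx` is `v` together with all other vertices.
-/

namespace SimpleGraph

variable {V : Type*} {G : SimpleGraph V} {u v w : V}

lemma exists_isPath_of_induce_connected {S : Set V} (hS : (G.induce S).Connected)
    (hu : u ∈ S) (hw : w ∈ S) : ∃ p : G.Walk u w, p.IsPath ∧ ∀ x ∈ p.support, x ∈ S := by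
  obtain ⟨q, hq⟩ := (hS ⟨u, hu⟩ ⟨w, hw⟩).exists_isPath
  have hqS : ∀ x ∈ (q.map (Embedding.induce (G := G) S).toHom).support, x ∈ S := by
    intro x hx
    rw [Walk.support_map, List.mem_map] at hx
    obtain ⟨y, -, rfl⟩ := hx
    exact y.2
  exact ⟨_, hq.map (Embedding.induce (G := G) S).injective, hqS⟩

lemma IsAcyclic.not_adj_of_inter_eq_singleton (hG : G.IsAcyclic) {Sx Sy : Set V}
    (hSx : (G.induce Sx).Connected) (hSy : (G.induce Sy).Connected) (hinter : Sx ∩ Sy = {v})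
    (hu : u ∈ Sx) (huy : u ∉ Sy) (hw : w ∈ Sy) (hwx : w ∉ Sx) : ¬G.Adj u w := by
  intro hadj
  have hv : v ∈ Sx ∩ Sy := hinter ▸ rfl
  obtain ⟨p, hp, hpx⟩ := exists_isPath_of_induce_connected hSx hv.1 hu
  obtain ⟨q, hq, hqy⟩ := exists_isPath_of_induce_connected hSy hv.2 hw
  exact hwx <| hpx w <|
    hG.mem_support_of_ne_mem_support_of_adj_of_isPath hp hq hadj fun hu' => huy (hqy u hu')

lemma IsAcyclic.mem_support_of_inter_eq_singleton (hG : G.IsAcyclic)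
    {Sx Sy : Set V} (hSx : (G.induce Sx).Connected) (hSy : (G.induce Sy).Connected)
    (hcover : Sx ∪ Sy = Set.univ) (hinter : Sx ∩ Sy = {v}) {a b : V} (p : G.Walk a b)
    (ha : a ∈ Sx) (hb : b ∈ Sy) :
    v ∈ p.support := by
  have mem_of_mem_inter : ∀ x, x ∈ Sx → x ∈ Sy → x = v := fun x hx hy =>
    (hinter ▸ ⟨hx, hy⟩ : x ∈ ({v} : Set V))
  by_contra hv
  have hay : a ∉ Sy := fun hay => hv (mem_of_mem_inter a ha hay ▸ p.start_mem_support)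
  have hbx : b ∉ Sx := fun hbx => hv (mem_of_mem_inter b hbx hb ▸ p.end_mem_support)
  obtain ⟨d, hd, hdx, hdx'⟩ := p.exists_boundary_dart Sx ha hbx
  have hdy : d.snd ∈ Sy := (hcover ▸ Set.mem_univ d.snd : d.snd ∈ Sx ∪ Sy).resolve_left hdx'
  have hdy' : d.fst ∉ Sy := fun h =>
    hv (mem_of_mem_inter _ hdx h ▸ p.dart_fst_mem_support_of_mem_darts hd)
  exact hG.not_adj_of_inter_eq_singleton hSx hSy hinter hdx hdy' hdy hdx' d.adj

lemma Walk.IsPath.append_of_support_inter {p : G.Walk u v} {q : G.Walk v w}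
    (hp : p.IsPath) (hq : q.IsPath) (h : ∀ x ∈ p.support, x ∈ q.support → x = v) :
    (p.append q).IsPath := by
  rw [Walk.isPath_def, Walk.support_append, List.nodup_append]
  have hq' := hq.support_nodup
  rw [← Walk.cons_tail_support q, List.nodup_cons] at hq'
  refine ⟨hp.support_nodup, hq'.2, fun x hxp y hyq hxy => ?_⟩
  subst hxy
  have hxv : x = v := h x hxp (Walk.cons_tail_support q ▸ List.mem_cons_of_mem v hyq)
  exact hq'.1 (hxv ▸ hyq)

lemma IsAcyclic.eq_of_isPath (hG : G.IsAcyclic) {p q : G.Walk u v} (hp : p.IsPath)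
    (hq : q.IsPath) : p = q :=
  congrArg Subtype.val ((hG.subsingleton_path u v).elim ⟨p, hp⟩ ⟨q, hq⟩)

lemma IsAcyclic.length_eq_dist (hG : G.IsAcyclic) {p : G.Walk u v} (hp : p.IsPath) :
    p.length = G.dist u v := by
  obtain ⟨q, hq, hlen⟩ := p.reachable.exists_path_of_dist
  rw [hG.eq_of_isPath hp hq, hlen]

def IsBetween (G : SimpleGraph V) (u w v : V) : Prop :=
  G.dist u w + G.dist w v = G.dist u v

lemma isBetween_self_left : G.IsBetween u u v := by
  simp [IsBetween]

lemma IsBetween.symm (h : G.IsBetween u w v) : G.IsBetween v w u := by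
  rw [IsBetween, dist_comm, add_comm, dist_comm (u := w), dist_comm (u := v)]
  exact h

lemma IsTree.mem_support_iff_isBetween (hG : G.IsTree) {p : G.Walk u v}
    (hp : p.IsPath) : w ∈ p.support ↔ G.IsBetween u w v := by
  constructor
  · intro hw
    obtain ⟨q, r, hq, hr, rfl⟩ := hp.mem_support_iff_exists_append.mp hw
    rw [IsBetween, ← hG.isAcyclic.length_eq_dist hq, ← hG.isAcyclic.length_eq_dist hr,
      ← hG.isAcyclic.length_eq_dist hp, Walk.length_append]
  · intro h
    obtain ⟨q, -, hq⟩ := hG.connected.exists_path_of_dist u w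
    obtain ⟨r, -, hr⟩ := hG.connected.exists_path_of_dist w v
    have hqr : (q.append r).IsPath :=
      (q.append r).isPath_of_length_eq_dist (by rw [Walk.length_append, hq, hr, h])
    rw [hG.isAcyclic.eq_of_isPath hp hqr, Walk.mem_support_append_iff]
    exact Or.inr r.start_mem_support

lemma IsTree.mem_support_of_isBetween (hG : G.IsTree) (h : G.IsBetween u w v)
    (p : G.Walk u v) : w ∈ p.support := by
  classical
  exact p.support_bypass_subset_support ((hG.mem_support_iff_isBetween p.bypass_isPath).mpr h)

lemma IsTree.isBetween_of_le (hG : G.IsTree) {a b x y : V} (hx : G.IsBetween a x b)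
    (hy : G.IsBetween a y b) (hxy : G.dist a x ≤ G.dist a y) : G.IsBetween a x y := by
  obtain ⟨p, hp, -⟩ := hG.connected.exists_path_of_dist a b
  obtain ⟨q, r, hq, hr, rfl⟩ :=
    hp.mem_support_iff_exists_append.mp ((hG.mem_support_iff_isBetween hp).mpr hy)
  rcases (Walk.mem_support_append_iff _ _).mp ((hG.mem_support_iff_isBetween hp).mpr hx)
    with hxq | hxr
  · exact (hG.mem_support_iff_isBetween hq).mp hxq
  · have hyxb := (hG.mem_support_iff_isBetween hr).mp hxr
    have : G.dist x y = G.dist y x := dist_comm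
    unfold IsBetween at *
    omega

lemma IsTree.isBetween_of_isBetween_of_isBetween (hG : G.IsTree) {a b s t x : V}
    (hs : G.IsBetween a s b) (ht : G.IsBetween a t b) (hx : G.IsBetween s x t) :
    G.IsBetween a x b := by
  wlog hst : G.dist a s ≤ G.dist a t generalizing s t
  · exact this ht hs hx.symm (le_of_not_ge hst)
  have hast := hG.isBetween_of_le hs ht hst
  have h₁ : G.dist a x ≤ G.dist a s + G.dist s x := hG.connected.dist_triangle
  have h₂ : G.dist x b ≤ G.dist x t + G.dist t b := hG.connected.dist_triangle
  have h₃ : G.dist a b ≤ G.dist a x + G.dist x b := hG.connected.dist_triangle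
  unfold IsBetween at *
  omega

lemma IsTree.isBetween_of_forall_dist_le (hG : G.IsTree) {a b r t w : V}
    (ht : G.IsBetween a t b) (hmin : ∀ x, G.IsBetween a x b → G.dist r t ≤ G.dist r x)
    (hw : G.IsBetween a w b) : G.IsBetween r t w := by
  obtain ⟨q, hq, hqlen⟩ := hG.connected.exists_path_of_dist r t
  obtain ⟨s, hs, hslen⟩ := hG.connected.exists_path_of_dist t w
  -- `s` stays on the geodesic from `a` to `b`, so none of its vertices is closer to `r` than `t`,
  -- while on `q` only `t` itself is that far from `r`.
  have hqs : ∀ x ∈ q.support, x ∈ s.support → x = t := by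
    intro x hxq hxs
    have h₁ := (hG.mem_support_iff_isBetween hq).mp hxq
    have h₂ := hmin x (hG.isBetween_of_isBetween_of_isBetween ht hw
      ((hG.mem_support_iff_isBetween hs).mp hxs))
    unfold IsBetween at h₁
    exact hG.connected.dist_eq_zero_iff.mp (by omega)
  have := hG.isAcyclic.length_eq_dist (hq.append_of_support_inter hs hqs)
  rwa [Walk.length_append, hqlen, hslen] at this

theorem IsTree.exists_forall_isBetween [Finite V] (hG : G.IsTree) {ι : Type*} [Finite ι]
    (a b : ι → V) (h : ∀ i j, ∃ w, G.IsBetween (a i) w (b i) ∧ G.IsBetween (a j) w (b j)) :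
    ∃ v, ∀ i, G.IsBetween (a i) v (b i) := by
  obtain ⟨r⟩ := hG.connected.nonempty
  cases isEmpty_or_nonempty ι
  · exact ⟨r, isEmptyElim⟩
  have htop : ∀ i, ∃ t ∈ {w | G.IsBetween (a i) w (b i)},
      ∀ w ∈ {w | G.IsBetween (a i) w (b i)}, G.dist r t ≤ G.dist r w := fun i =>
    Set.exists_min_image _ (G.dist r) (Set.toFinite _) ⟨a i, isBetween_self_left⟩
  choose t ht htmin using htop
  obtain ⟨k, hk⟩ := Finite.exists_max fun i => G.dist r (t i)
  refine ⟨t k, fun i => ?_⟩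
  obtain ⟨w, hwk, hwi⟩ := h k i
  have hrk := hG.isBetween_of_forall_dist_le (ht k) (htmin k) hwk
  have hri := hG.isBetween_of_forall_dist_le (ht i) (htmin i) hwi
  have hrik := hG.isBetween_of_le hri hrk (hk i)
  refine hG.isBetween_of_isBetween_of_isBetween (ht i) hwi ?_
  unfold IsBetween at *
  omega

lemma induce_connected_of_forall_walk {S : Set V} (hv : v ∈ S)
    (h : ∀ u ∈ S, ∃ p : G.Walk u v, ∀ x ∈ p.support, x ∈ S) : (G.induce S).Connected :=
  induce_connected_of_patches v hv fun {u} hu => by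
    obtain ⟨p, hp⟩ := h u hu
    exact ⟨_, hp, p.end_mem_support, p.start_mem_support,
      p.connected_induce_support.preconnected _ _⟩

lemma Walk.IsPath.exists_walk_not_mem_support {x : V} {q : G.Walk u v} (hq : q.IsPath)
    (hx : x ∈ q.support) (hxv : x ≠ v) : ∃ p : G.Walk u x, v ∉ p.support := by
  obtain ⟨p, r, -, -, rfl⟩ := hq.mem_support_iff_exists_append.mp hx
  exact ⟨p, fun hv => hq.ne_of_mem_support_of_append (Ne.symm hxv) hv r.end_mem_support rfl⟩

lemma Connected.connected_induce_insert (hG : G.Connected) {S : Set V}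
    (hS : ∀ u x (q : G.Walk u v), q.IsPath → x ∈ q.support → x ≠ v → u ∈ S → x ∈ S) :
    (G.induce (insert v S)).Connected := by
  refine induce_connected_of_forall_walk (Set.mem_insert v S) fun u hu => ?_
  obtain ⟨q, hq⟩ := (hG u v).exists_isPath
  refine ⟨q, fun x hx => ?_⟩
  by_cases hxv : x = v
  · exact Or.inl hxv
  rcases hu with rfl | hu
  · rw [Walk.nil_iff_support_eq.mp (Walk.isPath_iff_nil.mp hq), List.mem_singleton] at hx
    exact absurd hx hxv
  · exact Or.inr (hS u x q hq hx hxv hu)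

def reachAvoiding (G : SimpleGraph V) (v : V) (L : Set V) : Set V :=
  {u | ∃ d ∈ L, ∃ p : G.Walk u d, v ∉ p.support}

lemma mem_reachAvoiding_iff_of_mem_support {L : Set V} {x : V} {q : G.Walk u v}
    (hq : q.IsPath) (hx : x ∈ q.support) (hxv : x ≠ v) :
    x ∈ G.reachAvoiding v L ↔ u ∈ G.reachAvoiding v L := by
  obtain ⟨p, hp⟩ := hq.exists_walk_not_mem_support hx hxv
  constructor
  · rintro ⟨d, hd, r, hr⟩
    refine ⟨d, hd, p.append r, fun hv => ?_⟩
    rcases (Walk.mem_support_append_iff p r).mp hv with h | h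
    exacts [hp h, hr h]
  · rintro ⟨d, hd, r, hr⟩
    refine ⟨d, hd, p.reverse.append r, fun hv => ?_⟩
    rcases (Walk.mem_support_append_iff _ r).mp hv with h | h
    exacts [hp (by simpa using h), hr h]

theorem IsTree.exists_separation [Finite V] (hG : G.IsTree) (Lx Ly : Set V)
    (h : ∀ c ∈ Lx, ∀ d ∈ Ly, ∀ c' ∈ Lx, ∀ d' ∈ Ly, ∀ (P : G.Walk c d) (Q : G.Walk c' d'),
      P.IsPath → Q.IsPath → ∃ w ∈ P.support, w ∈ Q.support) :
    ∃ (v : V) (Sx Sy : Set V), (G.induce Sx).Connected ∧ (G.induce Sy).Connected ∧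
      Sx ∪ Sy = Set.univ ∧ Sx ∩ Sy = {v} ∧ Lx ⊆ Sx ∧ Ly ⊆ Sy := by
  obtain ⟨v, hv⟩ := hG.exists_forall_isBetween (ι := Lx × Ly) (fun i => i.1) (fun i => i.2)
    fun i j => by
      obtain ⟨P, hP, -⟩ := hG.connected.exists_path_of_dist i.1 i.2
      obtain ⟨Q, hQ, -⟩ := hG.connected.exists_path_of_dist j.1 j.2
      obtain ⟨w, hwP, hwQ⟩ := h _ i.1.2 _ i.2.2 _ j.1.2 _ j.2.2 P Q hP hQ
      exact ⟨w, (hG.mem_support_iff_isBetween hP).mp hwP,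
        (hG.mem_support_iff_isBetween hQ).mp hwQ⟩
  set A := G.reachAvoiding v Ly
  refine ⟨v, insert v Aᶜ, insert v A, ?_, ?_, ?_, ?_, ?_, ?_⟩
  · exact hG.connected.connected_induce_insert fun u x q hq hx hxv =>
      mt (mem_reachAvoiding_iff_of_mem_support hq hx hxv).mp
  · exact hG.connected.connected_induce_insert fun u x q hq hx hxv =>
      (mem_reachAvoiding_iff_of_mem_support hq hx hxv).mpr
  · ext u
    by_cases hu : u ∈ A <;> simp [hu]
  · ext u
    by_cases hu : u ∈ A <;> simp [hu]
  · rintro c hc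
    refine Or.inr fun ⟨d, hd, p, hp⟩ => hp ?_
    exact hG.mem_support_of_isBetween (hv (⟨c, hc⟩, ⟨d, hd⟩)) p
  · intro d hd
    by_cases hdv : d = v
    · exact Or.inl hdv
    · exact Or.inr ⟨d, hd, Walk.nil, by simpa using Ne.symm hdv⟩

end SimpleGraph

/-- In a tree with vertices labelled by (possibly empty) subsets of
labels {x, y}, exactly one of the following holds: (1) there are two vertex-disjoint
paths each from an x-labelled vertex to a y-labelled vertex; (2) there is a vertex v
and two subtrees (connected induced subgraphs) T_x, T_y covering all vertices,
intersecting exactly in {v}, with T_x containing all x-labelled vertices and T_y all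
y-labelled vertices. -/
theorem stmt_0 {V : Type*} [Fintype V] (T : SimpleGraph V) (hT : T.IsTree)
    (Lx Ly : Set V) :
    Xor'
      (∃ (a b c d : V) (P : T.Walk a b) (Q : T.Walk c d),
        P.IsPath ∧ Q.IsPath ∧ a ∈ Lx ∧ b ∈ Ly ∧ c ∈ Lx ∧ d ∈ Ly ∧
        ∀ w, w ∈ P.support → w ∉ Q.support)
      (∃ (v : V) (Sx Sy : Set V),
        (T.induce Sx).Connected ∧ (T.induce Sy).Connected ∧
        Sx ∪ Sy = Set.univ ∧ Sx ∩ Sy = {v} ∧ Lx ⊆ Sx ∧ Ly ⊆ Sy) := by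
  refine xor_iff_iff_not.mpr ⟨?_, ?_⟩
  · rintro ⟨a, b, c, d, P, Q, -, -, ha, hb, hc, hd, hPQ⟩
      ⟨v, Sx, Sy, hSx, hSy, hcover, hinter, hLx, hLy⟩
    have hv : ∀ {a b} (p : T.Walk a b), a ∈ Sx → b ∈ Sy → v ∈ p.support :=
      hT.isAcyclic.mem_support_of_inter_eq_singleton hSx hSy hcover hinter
    exact hPQ v (hv P (hLx ha) (hLy hb)) (hv Q (hLx hc) (hLy hd))
  · intro hsep
    by_contra hdisj
    refine hsep (hT.exists_separation Lx Ly fun c hc d hd c' hc' d' hd' P Q hP hQ => ?_)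
    by_contra! hPQ
    exact hdisj ⟨c, d, c', d', P, Q, hP, hQ, hc, hd, hc', hd', hPQ⟩
end

section
/- In a 2-connected sparse graph that is not a cycle, every cycle contains at least two vertices of degree at least 3, and these can be chosen non-adjacent. -/
/-!
A vertex of degree at most 2 on a cycle `C` has both of its edges on `C`, so a walk that starts
on `C` can leave it only through a vertex of degree at least 3; by sparsity two such vertices are
never adjacent. If `C` had no such vertex, connectivity would make `C` a spanning cycle containing
every edge. If it had exactly one, `u`, a neighbour of `u` off `C` would be joined to `C` in
`G - u`, and that walk would have to leave `C` through a vertex of degree 2.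
-/

namespace SimpleGraph

variable {V : Type*} {G : SimpleGraph V}

lemma ncard_neighborSet_eq_degree (v : V) [Fintype (G.neighborSet v)] :
    (G.neighborSet v).ncard = G.degree v := by
  rw [← Nat.card_coe_set_eq, Nat.card_eq_fintype_card, card_neighborSet_eq_degree]

lemma exists_walk_of_connected_induce_compl_singleton {t u w : V}
    (h : (G.induce {t}ᶜ).Connected) (hu : u ≠ t) (hw : w ≠ t) :
    ∃ p : G.Walk u w, t ∉ p.support := by
  obtain ⟨q⟩ := h.preconnected ⟨u, hu⟩ ⟨w, hw⟩
  let f := (Embedding.induce (G := G) {t}ᶜ).toHom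
  refine ⟨q.map f, fun ht => ?_⟩
  replace ht : t ∈ (q.map f).support := ht
  rw [Walk.support_map, List.mem_map] at ht
  obtain ⟨⟨z, hz⟩, -, hzt⟩ := ht
  exact hz hzt

lemma connected_of_connected_induce_compl_singleton [Fintype V]
    (hcard : 3 ≤ Fintype.card V) (h : ∀ v : V, (G.induce {v}ᶜ).Connected) : G.Connected := by
  classical
  have : Nonempty V := Fintype.card_pos_iff.mp (by omega)
  refine ⟨fun u w => ?_⟩
  have hlt : ({u, w} : Finset V).card < (Finset.univ : Finset V).card :=
    (Finset.card_le_two).trans_lt (by rw [Finset.card_univ]; omega)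
  obtain ⟨t, -, ht⟩ := Finset.exists_mem_notMem_of_card_lt_card hlt
  simp only [Finset.mem_insert, Finset.mem_singleton, not_or] at ht
  obtain ⟨p, -⟩ :=
    exists_walk_of_connected_induce_compl_singleton (h t) (Ne.symm ht.1) (Ne.symm ht.2)
  exact p.reachable

namespace Walk.IsCycle

variable {a : V} {C : G.Walk a a}

lemma neighborSet_toSubgraph_eq_of_degree_le_two (hC : C.IsCycle) {v : V} (hv : v ∈ C.support)
    [Fintype (G.neighborSet v)] (hd : G.degree v ≤ 2) :
    C.toSubgraph.neighborSet v = G.neighborSet v :=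
  Set.eq_of_subset_of_ncard_le (C.toSubgraph.neighborSet_subset v)
    (by rwa [ncard_neighborSet_eq_degree, hC.ncard_neighborSet_toSubgraph_eq_two hv])

lemma toSubgraph_adj_of_degree_le_two (hC : C.IsCycle) {v w : V} (hv : v ∈ C.support)
    [Fintype (G.neighborSet v)] (hd : G.degree v ≤ 2) (hadj : G.Adj v w) :
    C.toSubgraph.Adj v w := by
  rw [← Subgraph.mem_neighborSet, hC.neighborSet_toSubgraph_eq_of_degree_le_two hv hd]
  exact hadj

variable [G.LocallyFinite]

lemma mem_support_of_walk (hC : C.IsCycle) {u w : V} (p : G.Walk u w) (hu : u ∈ C.support)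
    (hdeg : ∀ z ∈ p.support, z ∈ C.support → G.degree z ≤ 2) : w ∈ C.support := by
  by_contra hw
  obtain ⟨d, hd, hfst, hsnd⟩ := p.exists_boundary_dart {z | z ∈ C.support} hu hw
  have hadj := hC.toSubgraph_adj_of_degree_le_two hfst
    (hdeg _ (p.dart_fst_mem_support_of_mem_darts hd) hfst) d.adj
  exact hsnd (C.mem_verts_toSubgraph.mp (C.toSubgraph.edge_vert hadj.symm))

lemma spanning_of_degree_le_two (hC : C.IsCycle) (hconn : G.Connected)
    (hdeg : ∀ z ∈ C.support, G.degree z ≤ 2) :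
    (∀ v, v ∈ C.support) ∧ ∀ e ∈ G.edgeSet, e ∈ C.edges := by
  have hspan (v : V) : v ∈ C.support :=
    hC.mem_support_of_walk (hconn.preconnected a v).some C.start_mem_support
      fun z _ hz => hdeg z hz
  refine ⟨hspan, ?_⟩
  rintro ⟨x, y⟩ hxy
  exact C.mem_edges_toSubgraph.mp <| Subgraph.mem_edgeSet.mpr <|
    hC.toSubgraph_adj_of_degree_le_two (hspan x) (hdeg x (hspan x)) hxy

lemma exists_ne_three_le_degree (hC : C.IsCycle) (hconn : ∀ v : V, (G.induce {v}ᶜ).Connected)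
    {u : V} (hu : u ∈ C.support) (hdu : 3 ≤ G.degree u) :
    ∃ v ∈ C.support, v ≠ u ∧ 3 ≤ G.degree v := by
  by_contra! hdeg
  have hdeg_le (z : V) (hz : z ∈ C.support) (hzu : z ≠ u) : G.degree z ≤ 2 :=
    Nat.le_of_lt_succ (hdeg z hz hzu)
  have hncard := hC.ncard_neighborSet_toSubgraph_eq_two hu
  obtain ⟨w, huw, hwC⟩ : ∃ w ∈ G.neighborSet u, w ∉ C.toSubgraph.neighborSet u :=
    Set.exists_mem_notMem_of_ncard_lt_ncard
      (by rw [hncard, ncard_neighborSet_eq_degree]; omega) C.finite_neighborSet_toSubgraph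
  obtain ⟨x, hux⟩ : (C.toSubgraph.neighborSet u).Nonempty :=
    Set.nonempty_of_ncard_ne_zero (by omega)
  have hw : w ∉ C.support := fun hw =>
    hwC (hC.toSubgraph_adj_of_degree_le_two hw (hdeg_le w hw (G.ne_of_adj huw).symm) huw.symm).symm
  have hx : x ∈ C.support := C.mem_verts_toSubgraph.mp (C.toSubgraph.edge_vert hux.symm)
  obtain ⟨p, hup⟩ := exists_walk_of_connected_induce_compl_singleton (hconn u)
    (G.ne_of_adj (C.toSubgraph.adj_sub hux)).symm (G.ne_of_adj huw).symm
  exact hw (hC.mem_support_of_walk p hx fun z hz hzC => hdeg_le z hzC (ne_of_mem_of_not_mem hz hup))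

end Walk.IsCycle

end SimpleGraph

open SimpleGraph

theorem stmt_3_general {V : Type*} [Fintype V] (G : SimpleGraph V)
    [DecidableRel G.Adj]
    (h2conn : 3 ≤ Fintype.card V ∧ ∀ v : V, (G.induce {v}ᶜ).Connected)
    (hsparse : ∀ u v : V, G.Adj u v → G.degree u ≤ 2 ∨ G.degree v ≤ 2)
    (hnotcycle : ¬ ∃ (a : V) (C : G.Walk a a), C.IsCycle ∧
      (∀ v : V, v ∈ C.support) ∧ ∀ e ∈ G.edgeSet, e ∈ C.edges) :
    ∀ (a : V) (C : G.Walk a a), C.IsCycle →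
      ∃ u v : V, u ∈ C.support ∧ v ∈ C.support ∧ u ≠ v ∧ ¬ G.Adj u v ∧
        3 ≤ G.degree u ∧ 3 ≤ G.degree v := by
  intro a C hC
  obtain ⟨hcard, hconn⟩ := h2conn
  by_cases h : ∃ u ∈ C.support, 3 ≤ G.degree u
  · obtain ⟨u, hu, hdu⟩ := h
    obtain ⟨v, hv, hvu, hdv⟩ := hC.exists_ne_three_le_degree hconn hu hdu
    refine ⟨u, v, hu, hv, hvu.symm, fun hadj => ?_, hdu, hdv⟩
    rcases hsparse u v hadj with h | h <;> omega
  · push Not at h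
    exact (hnotcycle ⟨a, C, hC, hC.spanning_of_degree_le_two
      (connected_of_connected_induce_compl_singleton hcard hconn)
      fun z hz => Nat.le_of_lt_succ (h z hz)⟩).elim

/-- In a 2-connected sparse graph that is not a cycle, every cycle
contains two non-adjacent vertices of degree at least 3. -/
theorem stmt_3 {V : Type*} [Fintype V] [DecidableEq V] (G : SimpleGraph V)
    [DecidableRel G.Adj]
    (h2conn : 3 ≤ Fintype.card V ∧ ∀ v : V, (G.induce {v}ᶜ).Connected)
    (hsparse : ∀ u v : V, G.Adj u v → G.degree u ≤ 2 ∨ G.degree v ≤ 2)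
    (hnotcycle : ¬ ∃ (a : V) (C : G.Walk a a), C.IsCycle ∧
      (∀ v : V, v ∈ C.support) ∧ ∀ e ∈ G.edgeSet, e ∈ C.edges) :
    ∀ (a : V) (C : G.Walk a a), C.IsCycle →
      ∃ u v : V, u ∈ C.support ∧ v ∈ C.support ∧ u ≠ v ∧ ¬ G.Adj u v ∧
        3 ≤ G.degree u ∧ 3 ≤ G.degree v :=
  stmt_3_general G h2conn hsparse hnotcycle
end

section
/- In a 2-connected graph G, no cycle of G contains exactly one vertex of degree at least 3 (in G). -/
/-!
A vertex of a cycle meets exactly two cycle edges, so it has degree at least `3` iff it has an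
edge outside the cycle. Suppose `v` were the only such vertex on the cycle, and let `vx` be an edge
at `v` outside the cycle. If `x` lies on the cycle, `xv` is an edge outside the cycle at `x ≠ v`.
Otherwise a path in `G - v` from `x` to a cycle neighbour of `v` enters the cycle through an edge
outside the cycle, at a vertex other than `v`.
-/

open SimpleGraph

namespace SimpleGraph

variable {V : Type*} {G : SimpleGraph V}

lemma degree_eq_ncard_neighborSet (v : V) [Fintype (G.neighborSet v)] :
    G.degree v = (G.neighborSet v).ncard := by
  rw [← card_neighborSet_eq_degree, ← Nat.card_eq_fintype_card, Nat.card_coe_set_eq]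

lemma Walk.IsCycle.three_le_degree_iff {u w : V} {C : G.Walk u u} (hC : C.IsCycle)
    (hw : w ∈ C.support) [Fintype (G.neighborSet w)] :
    3 ≤ G.degree w ↔ ∃ x, G.Adj w x ∧ ¬ C.toSubgraph.Adj w x := by
  have hsub : C.toSubgraph.neighborSet w ⊆ G.neighborSet w := C.toSubgraph.neighborSet_subset w
  have htwo := hC.ncard_neighborSet_toSubgraph_eq_two hw
  rw [degree_eq_ncard_neighborSet]
  constructor
  · intro h3
    by_contra hnone
    have hcycle : G.neighborSet w ⊆ C.toSubgraph.neighborSet w := fun x hwx =>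
      by_contra fun hnot => hnone ⟨x, hwx, hnot⟩
    have := Set.ncard_le_ncard hcycle C.finite_neighborSet_toSubgraph
    omega
  · rintro ⟨x, hwx, hnot⟩
    have := Set.ncard_lt_ncard (hsub.ssubset_of_not_subset fun h => hnot (h hwx))
    omega

lemma exists_adj_notMem_of_induce_compl_singleton_connected {S : Set V} {v x b : V}
    (h : (G.induce {v}ᶜ).Connected) (hx : x ∉ S) (hxv : x ≠ v) (hb : b ∈ S) (hbv : b ≠ v) :
    ∃ w y, w ∈ S ∧ w ≠ v ∧ y ∉ S ∧ G.Adj w y := by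
  obtain ⟨W⟩ := h.preconnected ⟨x, hxv⟩ ⟨b, hbv⟩
  obtain ⟨d, -, hfst, hsnd⟩ := W.exists_boundary_dart {z | z.1 ∉ S} hx (by simpa using hb)
  exact ⟨d.snd, d.fst, not_not.mp hsnd, d.snd.2, hfst, d.adj.symm⟩

end SimpleGraph

theorem stmt_5_general {V : Type*} [Fintype V] (G : SimpleGraph V)
    [DecidableRel G.Adj]
    (h2conn : ∀ v : V, (G.induce {v}ᶜ).Connected) :
    ∀ (a : V) (C : G.Walk a a), C.IsCycle →
      ¬ ∃! v : V, v ∈ C.support ∧ 3 ≤ G.degree v := by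
  intro a C hC ⟨v, ⟨hvC, hv3⟩, huniq⟩
  have off_cycle_edge : ∀ w ∈ C.support, ∀ y, G.Adj w y → ¬ C.toSubgraph.Adj w y → w = v :=
    fun w hw y hwy hnot => huniq w ⟨hw, (hC.three_le_degree_iff hw).2 ⟨y, hwy, hnot⟩⟩
  obtain ⟨x, hvx, hnot⟩ := (hC.three_le_degree_iff hvC).1 hv3
  by_cases hxC : x ∈ C.support
  · exact hvx.ne (off_cycle_edge x hxC v hvx.symm fun h => hnot h.symm).symm
  obtain ⟨b, hvb : C.toSubgraph.Adj v b⟩ :=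
    Set.nonempty_of_ncard_ne_zero (s := C.toSubgraph.neighborSet v)
      (by rw [hC.ncard_neighborSet_toSubgraph_eq_two hvC]; simp)
  obtain ⟨w, y, hwC, hwv, hyC, hwy⟩ :=
    exists_adj_notMem_of_induce_compl_singleton_connected (S := {z | z ∈ C.support})
      (h2conn v) hxC hvx.ne' (C.mem_verts_toSubgraph.mp hvb.snd_mem) hvb.ne.symm
  exact hwv (off_cycle_edge w hwC y hwy fun h => hyC (C.mem_verts_toSubgraph.mp h.snd_mem))

/-- In a 2-connected graph G (at least 3 vertices, removing any vertex
leaves it connected), no cycle of G contains exactly one vertex of degree at least 3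
in G. -/
theorem stmt_5 {V : Type*} [Fintype V] [DecidableEq V] (G : SimpleGraph V)
    [DecidableRel G.Adj]
    (hcard : 3 ≤ Fintype.card V)
    (h2conn : ∀ v : V, (G.induce {v}ᶜ).Connected) :
    ∀ (a : V) (C : G.Walk a a), C.IsCycle →
      ¬ ∃! v : V, v ∈ C.support ∧ 3 ≤ G.degree v :=
  stmt_5_general G h2conn
end

section
/- Let G be a graph in which every induced subgraph either has a vertex of degree at most 2 or has a clique cutset of size at most 2 or is bipartite. Then G is 3-colorable. -/
/-!
Induction on the vertex set `S` of an induced subgraph. A vertex of degree at most `2` in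
`G[S]` can be coloured last. A bipartite `G[S]` is coloured directly. If `C` is a clique
cutset of `G[S]` separating a component `A` of `G[S] - C` from the rest, then `G[A ∪ C]` and
`G[S \ A]` are coloured by induction; both colourings are injective on the clique `C`, so
permuting the colours of the second one makes them agree on `C`, and they glue since no
edge joins `A` to `S \ (A ∪ C)`.
-/

namespace SimpleGraph

variable {V α : Type*} {G : SimpleGraph V}

variable (G) in
def IsColoringOn (S : Set V) (f : V → α) : Prop :=
  ∀ ⦃u⦄, u ∈ S → ∀ ⦃v⦄, v ∈ S → G.Adj u v → f u ≠ f v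

lemma isColoringOn_empty (f : V → α) : G.IsColoringOn ∅ f := by
  simp [IsColoringOn]

lemma IsColoringOn.colorable {n : ℕ} {f : V → Fin n} (hf : G.IsColoringOn Set.univ f) :
    G.Colorable n :=
  ⟨Coloring.mk f fun huv => hf trivial trivial huv⟩

lemma IsColoringOn.injOn_of_isClique {S C : Set V} {f : V → α} (hf : G.IsColoringOn S f)
    (hC : G.IsClique C) (hCS : C ⊆ S) : Set.InjOn f C := by
  intro u hu v hv huv
  by_contra hne
  exact hf (hCS hu) (hCS hv) (hC hu hv hne) huv

lemma Coloring.exists_isColoringOn [Nonempty α] {S : Set V} (c : (G.induce S).Coloring α) :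
    ∃ f : V → α, G.IsColoringOn S f := by
  classical
  refine ⟨fun x => if hx : x ∈ S then c ⟨x, hx⟩ else Classical.arbitrary α, ?_⟩
  intro u hu v hv huv
  have hadj : (G.induce S).Adj ⟨u, hu⟩ ⟨v, hv⟩ := huv
  simpa only [dif_pos hu, dif_pos hv] using c.valid hadj

lemma IsColoringOn.update [DecidableEq V] {S : Set V} {v : V} {f : V → α}
    (hf : G.IsColoringOn (S \ {v}) f) {c : α} (hc : c ∉ f '' {u ∈ S | G.Adj v u}) :
    G.IsColoringOn S (Function.update f v c) := by
  have hv : ∀ ⦃w⦄, w ∈ S → G.Adj v w →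
      Function.update f v c v ≠ Function.update f v c w := by
    intro w hw hvw
    rw [Function.update_self, Function.update_of_ne hvw.ne']
    exact fun hcw => hc ⟨w, ⟨hw, hvw⟩, hcw.symm⟩
  intro u hu w hw huw
  by_cases huv : u = v
  · subst huv
    exact hv hw huw
  by_cases hwv : w = v
  · subst hwv
    exact (hv hu huw.symm).symm
  rw [Function.update_of_ne huv, Function.update_of_ne hwv]
  exact hf ⟨hu, huv⟩ ⟨hw, hwv⟩ huw

lemma exists_notMem_image_of_ncard_lt [Finite V] [Finite α] {s : Set V} (f : V → α)
    (hs : s.ncard < Nat.card α) : ∃ c, c ∉ f '' s := by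
  by_contra! hall
  have himage : f '' s = Set.univ := Set.eq_univ_of_forall hall
  have := Set.ncard_image_le (f := f) s.toFinite
  rw [himage, Set.ncard_univ] at this
  omega

lemma IsColoringOn.exists_of_ncard_lt [Finite V] [Finite α] {S : Set V} {v : V} {f : V → α}
    (hf : G.IsColoringOn (S \ {v}) f) (hv : {u ∈ S | G.Adj v u}.ncard < Nat.card α) :
    ∃ g : V → α, G.IsColoringOn S g := by
  classical
  obtain ⟨c, hc⟩ := exists_notMem_image_of_ncard_lt f hv
  exact ⟨_, hf.update hc⟩

lemma exists_perm_eqOn [Finite α] {C : Set V} {f g : V → α} (hf : Set.InjOn f C)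
    (hg : Set.InjOn g C) : ∃ σ : Equiv.Perm α, ∀ c ∈ C, σ (g c) = f c := by
  classical
  let e : g '' C ≃ f '' C :=
    (hg.bijOn_image.equiv g).symm.trans (hf.bijOn_image.equiv f)
  refine ⟨e.extendSubtype, fun c hc => ?_⟩
  have hsymm : (hg.bijOn_image.equiv g).symm ⟨g c, c, hc, rfl⟩ = ⟨c, hc⟩ :=
    (Equiv.symm_apply_eq _).2 rfl
  rw [Equiv.extendSubtype_apply_of_mem e _ ⟨c, hc, rfl⟩]
  simp only [e, Equiv.trans_apply, hsymm]
  rfl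

lemma exists_isColoringOn_of_isClique_separates [Finite α] {S A C : Set V}
    (hC : G.IsClique C) (hCS : C ⊆ S) (hAC : Disjoint A C)
    (hsep : ∀ ⦃x⦄, x ∈ A → ∀ ⦃y⦄, y ∈ S → G.Adj x y → y ∈ A ∪ C) {f g : V → α}
    (hf : G.IsColoringOn (A ∪ C) f) (hg : G.IsColoringOn (S \ A) g) :
    ∃ h : V → α, G.IsColoringOn S h := by
  classical
  have hCSA : C ⊆ S \ A := fun x hx => ⟨hCS hx, hAC.notMem_of_mem_right hx⟩
  obtain ⟨σ, hσ⟩ := exists_perm_eqOn (hf.injOn_of_isClique hC Set.subset_union_right)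
    (hg.injOn_of_isClique hC hCSA)
  have hA : ∀ ⦃u⦄, u ∈ A → ∀ ⦃w⦄, w ∈ S → G.Adj u w →
      A.piecewise f (σ ∘ g) u ≠ A.piecewise f (σ ∘ g) w := by
    intro u hu w hw huw
    rw [Set.piecewise_eq_of_mem _ _ _ hu]
    rcases hsep hu hw huw with hwA | hwC
    · rw [Set.piecewise_eq_of_mem _ _ _ hwA]
      exact hf (.inl hu) (.inl hwA) huw
    · rw [Set.piecewise_eq_of_notMem _ _ _ (hAC.notMem_of_mem_right hwC), Function.comp_apply,
        hσ w hwC]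
      exact hf (.inl hu) (.inr hwC) huw
  refine ⟨A.piecewise f (σ ∘ g), fun u hu w hw huw => ?_⟩
  by_cases huA : u ∈ A
  · exact hA huA hw huw
  by_cases hwA : w ∈ A
  · exact (hA hwA hu huw.symm).symm
  rw [Set.piecewise_eq_of_notMem _ _ _ huA, Set.piecewise_eq_of_notMem _ _ _ hwA]
  exact σ.injective.ne (hg ⟨hu, huA⟩ ⟨hw, hwA⟩ huw)

lemma exists_component_of_separates {S C : Set V} {a b : V} (ha : a ∈ S) (haC : a ∉ C)
    (hcut : ∀ W : G.Walk a b, (∀ w ∈ W.support, w ∈ S) → ∃ c ∈ W.support, c ∈ C) :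
    ∃ A ⊆ S \ C, a ∈ A ∧ b ∉ A ∧
      ∀ ⦃x⦄, x ∈ A → ∀ ⦃y⦄, y ∈ S → G.Adj x y → y ∈ A ∪ C := by
  refine ⟨{x | ∃ W : G.Walk a x, ∀ w ∈ W.support, w ∈ S \ C},
    fun x ⟨W, hW⟩ => hW x W.end_mem_support, ⟨.nil, by simp [ha, haC]⟩, fun ⟨W, hW⟩ => ?_, ?_⟩
  · obtain ⟨c, hcW, hcC⟩ := hcut W fun w hw => (hW w hw).1
    exact (hW c hcW).2 hcC
  · rintro x ⟨W, hW⟩ y hy hxy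
    by_cases hyC : y ∈ C
    · exact .inr hyC
    refine .inl ⟨W.concat hxy, fun w hw => ?_⟩
    rw [Walk.support_concat, List.mem_append, List.mem_singleton] at hw
    rcases hw with hw | rfl
    exacts [hW w hw, ⟨hy, hyC⟩]

lemma exists_isColoringOn_of_cliqueCutset [Finite V] [Finite α] {S C : Set V} {a b : V}
    (hCS : C ⊆ S) (hC : G.IsClique C) (ha : a ∈ S) (hb : b ∈ S) (haC : a ∉ C) (hbC : b ∉ C)
    (hcut : ∀ W : G.Walk a b, (∀ w ∈ W.support, w ∈ S) → ∃ c ∈ W.support, c ∈ C)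
    (ih : ∀ T ⊂ S, ∃ f : V → α, G.IsColoringOn T f) :
    ∃ f : V → α, G.IsColoringOn S f := by
  obtain ⟨A, hAS, haA, hbA, hsep⟩ := exists_component_of_separates ha haC hcut
  have hAC : Disjoint A C := Set.disjoint_left.2 fun x hx => (hAS hx).2
  obtain ⟨f, hf⟩ := ih (A ∪ C) <| ssubset_of_subset_not_subset
    (Set.union_subset (hAS.trans Set.sdiff_subset) hCS) fun h => (h hb).elim hbA hbC
  obtain ⟨g, hg⟩ := ih (S \ A) <| ssubset_of_subset_not_subset Set.sdiff_subset
    fun h => (h ha).2 haA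
  exact exists_isColoringOn_of_isClique_separates hC hCS hAC hsep hf hg

end SimpleGraph

/-- Let G be a graph in which every (nonempty) induced subgraph either
has a vertex of degree at most 2, or has a clique cutset of size at most 2, or is
bipartite. Then G is 3-colorable. -/
theorem stmt_9 {V : Type*} [Fintype V] (G : SimpleGraph V)
    (h : ∀ S : Set V, S.Nonempty →
      (∃ v ∈ S, {u ∈ S | G.Adj v u}.ncard ≤ 2) ∨
      (∃ C : Set V, C ⊆ S ∧ C.ncard ≤ 2 ∧ (∀ u ∈ C, ∀ v ∈ C, u ≠ v → G.Adj u v) ∧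
        ∃ a ∈ S, ∃ b ∈ S, a ∉ C ∧ b ∉ C ∧
          ∀ W : G.Walk a b, (∀ w ∈ W.support, w ∈ S) → ∃ c ∈ W.support, c ∈ C) ∨
      (G.induce S).Colorable 2) :
    G.Colorable 3 := by
  suffices ∀ S : Set V, ∃ f : V → Fin 3, G.IsColoringOn S f by
    obtain ⟨f, hf⟩ := this Set.univ
    exact hf.colorable
  intro S
  induction S using WellFoundedLT.induction with | _ S ih => ?_
  rcases S.eq_empty_or_nonempty with rfl | hS
  · exact ⟨fun _ => 0, SimpleGraph.isColoringOn_empty _⟩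
  rcases h S hS with ⟨v, hv, hdeg⟩ | ⟨C, hCS, -, hC, a, ha, b, hb, haC, hbC, hcut⟩ | hbip
  · obtain ⟨f, hf⟩ := ih (S \ {v}) (Set.sdiff_singleton_ssubset.2 hv)
    exact hf.exists_of_ncard_lt (by simpa [Nat.lt_succ_iff] using hdeg)
  · exact SimpleGraph.exists_isColoringOn_of_cliqueCutset hCS hC ha hb haC hbC hcut ih
  · obtain ⟨c⟩ := hbip.mono (by norm_num : 2 ≤ 3)
    exact c.exists_isColoringOn
end

section
/- Let G be a 2-connected graph and C a star cutset of G that is inclusionwise minimal among star cutsets, with center c, and let Y be a connected component of G − C. Then G[C ∪ Y] is 2-connected. -/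
/-- C is a star cutset of G with center c: c ∈ C is adjacent to all other vertices of
C, and some two vertices outside C are separated by C. -/
def IsStarCutsetWithCenter {V : Type*} (G : SimpleGraph V) (C : Set V) (c : V) : Prop :=
  c ∈ C ∧ (∀ v ∈ C, v ≠ c → G.Adj c v) ∧
  ∃ a b : V, a ∉ C ∧ b ∉ C ∧ ∀ W : G.Walk a b, ∃ w ∈ W.support, w ∈ C

/-- A graph is 2-connected: at least 3 vertices, and deleting any vertex leaves it
connected. -/
def TwoConnected {W : Type*} (H : SimpleGraph W) : Prop :=
  3 ≤ Nat.card W ∧ ∀ v : W, (H.induce {v}ᶜ).Connected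


/-!
Removing a vertex `v ≠ c` leaves the star `C \ {v}` connected through `c`, and every vertex of
`Y` reaches it: a path in `G - v` from `Y` to a vertex beyond `C ∪ Y` (one exists since `C` is a
cutset) enters `C` as soon as it leaves `Y`. Removing `c` leaves `Y` connected, and by minimality of
`C` every other vertex `x` of `C` has a neighbour in `Y`, since otherwise `C \ {x}` would still
separate `Y` from the rest of the graph.
-/

def IsCutset {V : Type*} (G : SimpleGraph V) (C : Set V) : Prop :=
  ∃ a b : V, a ∉ C ∧ b ∉ C ∧ ∀ W : G.Walk a b, ∃ w ∈ W.support, w ∈ C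

namespace SimpleGraph

variable {V : Type*} {G : SimpleGraph V}

lemma Walk.exists_exit {Y : Set V} {u v : V} (p : G.Walk u v) (hu : u ∈ Y) (hv : v ∉ Y) :
    ∃ y ∈ Y, ∃ w ∉ Y, G.Adj y w ∧
      ∃ q : G.Walk u w, q.support ⊆ p.support ∧ ∀ x ∈ q.support, x ∈ Y ∨ x = w := by
  induction p with
  | nil => exact absurd hu hv
  | @cons a b _ hab p ih =>
    by_cases hb : b ∈ Y
    · obtain ⟨y, hy, w, hw, hyw, q, hqp, hqY⟩ := ih hb hv
      refine ⟨y, hy, w, hw, hyw, q.cons hab, ?_, ?_⟩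
      · simpa using List.cons_subset_cons a hqp
      · simpa [hu] using hqY
    · refine ⟨a, hu, b, hb, hab, Walk.cons hab Walk.nil, ?_, ?_⟩ <;> simp [hu]

lemma Walk.mem_of_mem_support_map_induce {s : Set V} {a b : s} (p : (G.induce s).Walk a b)
    {w : V} (hw : w ∈ (p.map (Embedding.induce s).toHom).support) : w ∈ s := by
  rw [Walk.support_map] at hw
  obtain ⟨⟨w, hws⟩, -, rfl⟩ := List.mem_map.1 hw
  exact hws

lemma induce_connected_of_forall_adj {S : Set V} {c : V} (hc : c ∈ S)
    (h : ∀ x ∈ S, x ≠ c → G.Adj c x) : (G.induce S).Connected := by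
  rw [connected_iff_exists_forall_reachable]
  refine ⟨⟨c, hc⟩, fun ⟨x, hx⟩ => ?_⟩
  by_cases hxc : x = c
  · subst hxc; rfl
  · exact (induce_adj.2 (h x hx hxc)).reachable

lemma induce_union_connected_of_forall_exists {A B : Set V} (hA : (G.induce A).Connected)
    (h : ∀ b ∈ B, ∃ t ⊆ A ∪ B, b ∈ t ∧ (A ∩ t).Nonempty ∧ (G.induce t).Connected) :
    (G.induce (A ∪ B)).Connected := by
  obtain ⟨⟨a, ha⟩⟩ := hA.nonempty
  refine induce_connected_of_patches a (Or.inl ha) fun {x} hx => ?_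
  rcases hx with hxA | hxB
  · exact ⟨A, Set.subset_union_left, ha, hxA, hA.preconnected _ _⟩
  · obtain ⟨t, htAB, hxt, hAt, ht⟩ := h x hxB
    exact ⟨A ∪ t, Set.union_subset Set.subset_union_left htAB, Or.inl ha, Or.inr hxt,
      induce_union_connected hA.preconnected ht.preconnected hAt _ _⟩

lemma connected_induce_induce_iff {S : Set V} (T : Set S) :
    ((G.induce S).induce T).Connected ↔ (G.induce (Subtype.val '' T)).Connected :=
  Iso.connected_iff ⟨Equiv.Set.image _ T Subtype.val_injective, Iff.rfl⟩

end SimpleGraph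

open SimpleGraph

section Component

variable {V : Type*} {G : SimpleGraph V} {C Y : Set V}

lemma mem_of_adj_of_notMem (hYmax : ∀ u ∈ Y, ∀ v ∈ Cᶜ, G.Adj u v → v ∈ Y) {y w : V}
    (hy : y ∈ Y) (hw : w ∉ Y) (hyw : G.Adj y w) : w ∈ C :=
  not_not.1 fun hwC => hw (hYmax y hy w hwC hyw)

lemma IsCutset.exists_notMem_union (hC : IsCutset G C) (hYsub : Y ⊆ Cᶜ)
    (hY : (G.induce Y).Preconnected) : ∃ z, z ∉ C ∧ z ∉ Y := by
  obtain ⟨a, b, haC, hbC, hsep⟩ := hC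
  by_contra! h
  obtain ⟨p⟩ := hY ⟨a, h a haC⟩ ⟨b, h b hbC⟩
  obtain ⟨w, hw, hwC⟩ := hsep (p.map (Embedding.induce Y).toHom)
  exact hYsub (p.mem_of_mem_support_map_induce hw) hwC

/-- A walk from `Y` to `z` leaves `Y` through a neighbour of `Y`: a vertex of `C` other than `x`. -/
lemma isCutset_diff_singleton (hYsub : Y ⊆ Cᶜ) (hYmax : ∀ u ∈ Y, ∀ v ∈ Cᶜ, G.Adj u v → v ∈ Y)
    {x y z : V} (hx : ∀ u ∈ Y, ¬ G.Adj u x) (hy : y ∈ Y) (hzC : z ∉ C) (hzY : z ∉ Y) :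
    IsCutset G (C \ {x}) := by
  refine ⟨y, z, fun h => hYsub hy h.1, fun h => hzC h.1, fun p => ?_⟩
  obtain ⟨d, hd, hdY, hdY'⟩ := p.exists_boundary_dart Y hy hzY
  refine ⟨d.snd, p.dart_snd_mem_support_of_mem_darts hd,
    mem_of_adj_of_notMem hYmax hdY hdY' d.adj, ?_⟩
  rintro rfl
  exact hx _ hdY d.adj

lemma exists_adj_of_minimal {c : V} (hstar : IsStarCutsetWithCenter G C c)
    (hmin : ∀ C' : Set V, C' ⊂ C → ∀ c' : V, ¬ IsStarCutsetWithCenter G C' c')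
    (hYsub : Y ⊆ Cᶜ) (hYmax : ∀ u ∈ Y, ∀ v ∈ Cᶜ, G.Adj u v → v ∈ Y) {y z : V} (hy : y ∈ Y)
    (hzC : z ∉ C) (hzY : z ∉ Y) {x : V} (hx : x ∈ C) (hxc : x ≠ c) : ∃ u ∈ Y, G.Adj u x := by
  obtain ⟨hcC, hc, -⟩ := hstar
  by_contra! hxY
  exact hmin (C \ {x}) (Set.sdiff_singleton_ssubset.2 hx) c
    ⟨⟨hcC, hxc.symm⟩, fun w hw hwc => hc w hw.1 hwc,
      isCutset_diff_singleton hYsub hYmax hxY hy hzC hzY⟩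

lemma connected_induce_union_diff_center {c : V} (hcY : c ∉ Y) (hY : (G.induce Y).Connected)
    (hC : ∀ x ∈ C, x ≠ c → ∃ u ∈ Y, G.Adj u x) : (G.induce ((C ∪ Y) \ {c})).Connected := by
  rw [Set.union_sdiff_distrib, Set.sdiff_singleton_eq_self hcY, Set.union_comm]
  refine induce_union_connected_of_forall_exists hY fun x ⟨hx, hxc⟩ => ?_
  obtain ⟨u, hu, hux⟩ := hC x hx hxc
  exact ⟨{u, x}, Set.insert_subset (Or.inl hu) (Set.singleton_subset_iff.2 (Or.inr ⟨hx, hxc⟩)),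
    Set.mem_insert_of_mem _ rfl, ⟨u, hu, Set.mem_insert _ _⟩, induce_pair_connected_of_adj hux⟩

lemma connected_induce_union_diff_of_ne_center {c v z : V} (hcC : c ∈ C)
    (hc : ∀ x ∈ C, x ≠ c → G.Adj c x) (hYmax : ∀ u ∈ Y, ∀ v ∈ Cᶜ, G.Adj u v → v ∈ Y)
    (hzC : z ∉ C) (hzY : z ∉ Y) (hv : v ∈ C ∪ Y) (hvc : v ≠ c)
    (hG : (G.induce {v}ᶜ).Connected) : (G.induce ((C ∪ Y) \ {v})).Connected := by
  rw [Set.union_sdiff_distrib]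
  refine induce_union_connected_of_forall_exists
    (induce_connected_of_forall_adj ⟨hcC, hvc.symm⟩ fun x hx hxc => hc x hx.1 hxc) ?_
  rintro y ⟨hy, hyv⟩
  have hzv : z ≠ v := by rintro rfl; exact hv.elim hzC hzY
  obtain ⟨p⟩ := hG.preconnected ⟨y, hyv⟩ ⟨z, hzv⟩
  obtain ⟨u, hu, w, hwY, huw, q, hqp, hqY⟩ :=
    (p.map (Embedding.induce _).toHom).exists_exit hy hzY
  have hwC : w ∈ C := mem_of_adj_of_notMem hYmax hu hwY huw
  have hqv : ∀ x ∈ q.support, x ≠ v := fun x hx => p.mem_of_mem_support_map_induce (hqp hx)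
  refine ⟨{x | x ∈ q.support}, fun x hx => ?_, q.start_mem_support,
    ⟨w, ⟨hwC, hqv w q.end_mem_support⟩, q.end_mem_support⟩, q.connected_induce_support⟩
  rcases hqY x hx with hxY | rfl
  · exact Or.inr ⟨hxY, hqv x hx⟩
  · exact Or.inl ⟨hwC, hqv x hx⟩

end Component

theorem stmt_12_general {V : Type*} (G : SimpleGraph V)
    (h2conn : TwoConnected G) (C : Set V) (c : V)
    (hstar : IsStarCutsetWithCenter G C c)
    (hmin : ∀ C' : Set V, C' ⊂ C → ∀ c' : V, ¬ IsStarCutsetWithCenter G C' c')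
    (Y : Set V) (hYsub : Y ⊆ Cᶜ)
    (hYconn : (G.induce Y).Connected)
    (hYmax : ∀ u ∈ Y, ∀ v ∈ Cᶜ, G.Adj u v → v ∈ Y)
    (hcard : 3 ≤ (C ∪ Y).ncard) :
    TwoConnected (G.induce (C ∪ Y)) := by
  obtain ⟨⟨y, hy⟩⟩ := hYconn.nonempty
  obtain ⟨z, hzC, hzY⟩ := IsCutset.exists_notMem_union hstar.2.2 hYsub hYconn.preconnected
  refine ⟨by rwa [Nat.card_coe_set_eq], fun v => ?_⟩
  rw [connected_induce_induce_iff, Set.image_val_compl, Set.image_singleton]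
  by_cases hvc : (v : V) = c
  · rw [hvc]
    exact connected_induce_union_diff_center (fun hcY => hYsub hcY hstar.1) hYconn
      fun x hx hxc => exists_adj_of_minimal hstar hmin hYsub hYmax hy hzC hzY hx hxc
  · exact connected_induce_union_diff_of_ne_center hstar.1 hstar.2.1 hYmax hzC hzY v.2 hvc
      (h2conn.2 v)

/-- Let G be 2-connected, C an inclusionwise minimal star cutset with
center c, and Y a connected component of G − C (with |C ∪ Y| ≥ 3). Then G[C ∪ Y] is
2-connected. -/
theorem stmt_12 {V : Type*} [Fintype V] (G : SimpleGraph V)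
    (h2conn : TwoConnected G) (C : Set V) (c : V)
    (hstar : IsStarCutsetWithCenter G C c)
    (hmin : ∀ C' : Set V, C' ⊂ C → ∀ c' : V, ¬ IsStarCutsetWithCenter G C' c')
    (Y : Set V) (hYsub : Y ⊆ Cᶜ) (hYne : Y.Nonempty)
    (hYconn : (G.induce Y).Connected)
    (hYmax : ∀ u ∈ Y, ∀ v ∈ Cᶜ, G.Adj u v → v ∈ Y)
    (hcard : 3 ≤ (C ∪ Y).ncard) :
    TwoConnected (G.induce (C ∪ Y)) :=
  stmt_12_general G h2conn C c hstar hmin Y hYsub hYconn hYmax hcard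
end

section
/- Let G be a 2-connected series-parallel triangle-free graph with no clique cutset, and suppose every vertex of G of degree 2 lies in N[x] ∪ N[y] for some vertices x, y with x = y or xy ∈ E(G). Assume also that every cycle of G contains at least two vertices of degree 2 and that all vertices of (N[x] ∪ N[y]) \ {x,y} have degree 2 and form a stable set. Then the induced subgraph G − (N[x] ∪ N[y]) is a tree. -/
/-!
A cycle of `G − (N[x] ∪ N[y])` would be a cycle of `G` without vertices of degree 2, since all
of those lie in `N[x] ∪ N[y]`; so the graph is acyclic. For connectivity, take a walk of `G`
between two remaining vertices that avoids the clique `{x, y}` (it exists because `G` has no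
clique cutset). Whenever it enters some `v ∈ (N[x] ∪ N[y]) \ {x, y}`, the vertex `v` has
degree 2 and one of its neighbours is `x` or `y`, so the walk leaves `v` through the vertex it
came from and this detour can be cut out. Finally the graph is nonempty: a neighbour `m ≠ y` of
`x` has degree 2, and by triangle-freeness and stability its other neighbour lies outside
`N[x] ∪ N[y]`.
-/

/-- A graph H is a subdivision of K₄ (four branch vertices joined by six internally
disjoint paths covering all vertices and edges of H). -/
def IsK4Subdivision {W : Type*} (H : SimpleGraph W) : Prop :=
  ∃ (b : Fin 4 → W), Function.Injective b ∧
    ∃ P : ∀ i j : Fin 4, H.Walk (b i) (b j),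
      (∀ i j, i ≠ j → (P i j).IsPath) ∧
      (∀ i j, i ≠ j → P j i = (P i j).reverse) ∧
      (∀ i j, i ≠ j → ∀ v ∈ (P i j).support, v ∈ Set.range b → v = b i ∨ v = b j) ∧
      (∀ i j k l, i ≠ j → k ≠ l → s(i, j) ≠ s(k, l) →
        ∀ v, v ∈ (P i j).support → v ∈ (P k l).support → v ∈ Set.range b) ∧
      (∀ v : W, ∃ i j, i ≠ j ∧ v ∈ (P i j).support) ∧
      (∀ e ∈ H.edgeSet, ∃ i j, i ≠ j ∧ e ∈ (P i j).edges)

/-- G is series-parallel: no subgraph of G is a subdivision of K₄. -/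
def SeriesParallel {V : Type*} (G : SimpleGraph V) : Prop :=
  ¬ ∃ H : G.Subgraph, IsK4Subdivision H.coe

namespace SimpleGraph

variable {V : Type*} {G : SimpleGraph V}

def closedNeighborSet (G : SimpleGraph V) (v : V) : Set V := insert v (G.neighborSet v)

def HasCliqueCutset (G : SimpleGraph V) : Prop :=
  ∃ K : Set V, G.IsClique K ∧
    ∃ a b : V, a ∉ K ∧ b ∉ K ∧ ∀ W : G.Walk a b, ∃ c ∈ W.support, c ∈ K

theorem exists_adj_of_mem_closedNeighborSet_union_sdiff {x y v : V}
    (hv : v ∈ (G.closedNeighborSet x ∪ G.closedNeighborSet y) \ {x, y}) :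
    ∃ t ∈ ({x, y} : Set V), G.Adj v t := by
  obtain ⟨(rfl | hxv) | (rfl | hyv), hvxy⟩ := hv
  · exact absurd (Or.inl rfl) hvxy
  · exact ⟨x, Or.inl rfl, hxv.symm⟩
  · exact absurd (Or.inr rfl) hvxy
  · exact ⟨y, Or.inr rfl, hyv.symm⟩

theorem eq_of_adj_of_degree_eq_two {v a b c : V} [Fintype (G.neighborSet v)]
    (hv : G.degree v = 2) (ha : G.Adj v a) (hb : G.Adj v b) (hc : G.Adj v c)
    (hca : c ≠ a) (hcb : c ≠ b) : a = b := by
  classical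
  by_contra hab
  have hsub : ({a, b, c} : Finset V) ⊆ G.neighborFinset v := by
    simp [Finset.insert_subset_iff, ha, hb, hc]
  have := Finset.card_le_card hsub
  rw [Finset.card_eq_three.mpr ⟨a, b, c, hab, hca.symm, hcb.symm, rfl⟩,
    card_neighborFinset_eq_degree, hv] at this
  omega

theorem exists_adj_ne_of_degree_eq_two {v : V} [Fintype (G.neighborSet v)]
    (hv : G.degree v = 2) (a : V) : ∃ w, G.Adj v w ∧ w ≠ a := by
  obtain ⟨w, hw, hwa⟩ := Finset.exists_mem_ne
    (by rw [card_neighborFinset_eq_degree, hv]; omega : 1 < (G.neighborFinset v).card) a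
  exact ⟨w, (mem_neighborFinset _ _ _).mp hw, hwa⟩

theorem exists_walk_avoiding_of_not_hasCliqueCutset (hG : ¬ G.HasCliqueCutset)
    {K : Set V} (hK : G.IsClique K) {a b : V} (ha : a ∉ K) (hb : b ∉ K) :
    ∃ W : G.Walk a b, ∀ c ∈ W.support, c ∉ K := by
  by_contra h
  push Not at h
  exact hG ⟨K, hK, a, b, ha, hb, h⟩

theorem exists_adj_ne_of_not_hasCliqueCutset [Fintype V] (hG : ¬ G.HasCliqueCutset)
    (hcard : 3 ≤ Fintype.card V) (x y : V) : ∃ m, G.Adj x m ∧ m ≠ y := by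
  classical
  obtain ⟨c, -, hc⟩ := Finset.exists_mem_notMem_of_card_lt_card (s := {x, y}) (t := .univ)
    (Finset.card_le_two.trans_lt (by rw [Finset.card_univ]; omega))
  simp only [Finset.mem_insert, Finset.mem_singleton, not_or] at hc
  -- Cutting out `y` (unless `y = x`) must leave `x` connected to `c`.
  have hK : G.IsClique ({y} \ {x} : Set V) := (isClique_singleton y).subset Set.sdiff_subset
  obtain ⟨W, hW⟩ := exists_walk_avoiding_of_not_hasCliqueCutset hG hK (a := x) (b := c)
    (by simp) (by simp [hc.2])
  cases W with
  | nil => exact absurd rfl hc.1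
  | cons hxm W =>
    refine ⟨_, hxm, fun hmy => ?_⟩
    subst hmy
    have := hW _ (List.mem_cons_of_mem _ W.start_mem_support)
    simp only [Set.mem_sdiff, Set.mem_singleton_iff, true_and, not_not] at this
    exact hxm.ne this.symm

theorem reachable_induce_compl_of_walk_avoiding [∀ v, Fintype (G.neighborSet v)] {S T : Set V}
    (hS : ∀ v ∈ S \ T, G.degree v = 2 ∧ ∃ t ∈ T, G.Adj v t) :
    ∀ {a b : V} (W : G.Walk a b) (ha : a ∉ S) (hb : b ∉ S), (∀ c ∈ W.support, c ∉ T) →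
      (G.induce Sᶜ).Reachable ⟨a, ha⟩ ⟨b, hb⟩
  | _, _, .nil, _, _, _ => .rfl
  | _, _, .cons hab .nil, _, _, _ => (induce_adj.2 hab).reachable
  | a, b, .cons (v := v) hav (.cons hvw W), ha, hb, hW => by
    by_cases hv : v ∈ S
    · obtain ⟨hdeg, t, htT, hvt⟩ := hS v ⟨hv, hW v (by simp)⟩
      have haw := eq_of_adj_of_degree_eq_two hdeg hav.symm hvw hvt
        (ne_of_mem_of_not_mem htT (hW a (by simp)))
        (ne_of_mem_of_not_mem htT (hW _ (by simp)))
      exact reachable_induce_compl_of_walk_avoiding hS (W.copy haw.symm rfl) ha hb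
        (fun c hc => hW c (by simp_all))
    · exact (induce_adj.2 hav).reachable.trans
        (reachable_induce_compl_of_walk_avoiding hS (.cons hvw W) hv hb
          (fun c hc => hW c (List.mem_cons_of_mem _ hc)))
termination_by _ _ W => W.length
decreasing_by all_goals simp

theorem isAcyclic_induce_compl {S : Set V}
    (hS : ∀ (r : V) (C : G.Walk r r), C.IsCycle → ∃ v ∈ C.support, v ∈ S) :
    (G.induce Sᶜ).IsAcyclic := by
  intro r C hC
  let e : G.induce Sᶜ ↪g G := Embedding.induce Sᶜ
  obtain ⟨v, hv, hvS⟩ := hS _ _ (hC.map (f := e.toHom) e.injective)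
  rw [Walk.support_map] at hv
  obtain ⟨u, -, rfl⟩ := List.mem_map.mp hv
  exact u.2 hvS

theorem exists_not_mem_closedNeighborSet_union [∀ v, Fintype (G.neighborSet v)]
    (htf : G.CliqueFree 3) {x y m : V} (hxy : x = y ∨ G.Adj x y) (hxm : G.Adj x m) (hmy : m ≠ y)
    (hdeg : ∀ v ∈ (G.closedNeighborSet x ∪ G.closedNeighborSet y) \ {x, y}, G.degree v = 2)
    (hstable : ∀ u ∈ (G.closedNeighborSet x ∪ G.closedNeighborSet y) \ {x, y},
      ∀ v ∈ (G.closedNeighborSet x ∪ G.closedNeighborSet y) \ {x, y}, ¬ G.Adj u v) :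
    ∃ w, w ∉ G.closedNeighborSet x ∪ G.closedNeighborSet y := by
  classical
  have hm : m ∈ (G.closedNeighborSet x ∪ G.closedNeighborSet y) \ {x, y} :=
    ⟨Or.inl (Or.inr hxm), by simp [hxm.ne', hmy]⟩
  obtain ⟨w, hmw, hwx⟩ := exists_adj_ne_of_degree_eq_two (hdeg m hm) x
  refine ⟨w, fun hw => hstable m hm w ⟨hw, ?_⟩ hmw⟩
  have hwy : w ≠ y := by
    rintro rfl
    rcases hxy with rfl | hxw
    · exact hwx rfl
    · exact htf {w, x, m} (is3Clique_triple_iff.mpr ⟨hxw.symm, hmw.symm, hxm⟩)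
  simp [hwx, hwy]

end SimpleGraph

open SimpleGraph

theorem stmt_19_general {V : Type*} [Fintype V] (G : SimpleGraph V)
    [DecidableRel G.Adj]
    (htf : G.CliqueFree 3)
    (hcard : 3 ≤ Fintype.card V)
    (hnocc : ¬ ∃ K : Set V, (∀ u ∈ K, ∀ v ∈ K, u ≠ v → G.Adj u v) ∧
      ∃ a b : V, a ∉ K ∧ b ∉ K ∧ ∀ W : G.Walk a b, ∃ c ∈ W.support, c ∈ K)
    (x y : V) (hxy : x = y ∨ G.Adj x y)
    (hdeg2 : ∀ v : V, G.degree v = 2 →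
      v ∈ insert x (G.neighborSet x) ∪ insert y (G.neighborSet y))
    (hcycdeg2 : ∀ (r : V) (C : G.Walk r r), C.IsCycle →
      ∃ u v : V, u ∈ C.support ∧ v ∈ C.support ∧ u ≠ v ∧
        G.degree u = 2 ∧ G.degree v = 2)
    (hnbrdeg : ∀ v ∈ (insert x (G.neighborSet x) ∪ insert y (G.neighborSet y)) \ {x, y},
      G.degree v = 2)
    (hstable : ∀ u ∈ (insert x (G.neighborSet x) ∪ insert y (G.neighborSet y)) \ {x, y},
      ∀ v ∈ (insert x (G.neighborSet x) ∪ insert y (G.neighborSet y)) \ {x, y},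
      ¬ G.Adj u v) :
    (G.induce ((insert x (G.neighborSet x) ∪ insert y (G.neighborSet y))ᶜ)).IsTree := by
  let S := G.closedNeighborSet x ∪ G.closedNeighborSet y
  have hxyS : {x, y} ⊆ S := by
    rintro v (rfl | rfl)
    exacts [Or.inl (Or.inl rfl), Or.inr (Or.inl rfl)]
  refine ⟨(connected_iff _).mpr ⟨fun a b => ?_, ?_⟩, isAcyclic_induce_compl fun r C hC => ?_⟩
  · obtain ⟨W, hW⟩ := exists_walk_avoiding_of_not_hasCliqueCutset hnocc
      (isClique_pair.mpr hxy.resolve_left) (a.2 <| hxyS ·) (b.2 <| hxyS ·)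
    refine reachable_induce_compl_of_walk_avoiding (fun v hv => ⟨hnbrdeg v hv, ?_⟩)
      W a.2 b.2 hW
    exact exists_adj_of_mem_closedNeighborSet_union_sdiff hv
  · obtain ⟨m, hxm, hmy⟩ := exists_adj_ne_of_not_hasCliqueCutset hnocc hcard x y
    obtain ⟨w, hw⟩ := exists_not_mem_closedNeighborSet_union htf hxy hxm hmy hnbrdeg hstable
    exact ⟨⟨w, hw⟩⟩
  · obtain ⟨u, -, hu, -, -, hdu, -⟩ := hcycdeg2 r C hC
    exact ⟨u, hu, hdeg2 u hdu⟩

/-- Let G be a 2-connected, series-parallel, triangle-free graph with no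
clique cutset, and x, y vertices with x = y or xy ∈ E(G), such that every vertex of
degree 2 lies in N[x] ∪ N[y], every cycle of G contains at least two vertices of
degree 2, and all vertices of (N[x] ∪ N[y]) \ {x, y} have degree 2 and form a stable
set. Then G − (N[x] ∪ N[y]) is a tree. -/
theorem stmt_19 {V : Type*} [Fintype V] [DecidableEq V] (G : SimpleGraph V)
    [DecidableRel G.Adj]
    (htf : G.CliqueFree 3)
    (hcard : 3 ≤ Fintype.card V)
    (h2conn : ∀ v : V, (G.induce {v}ᶜ).Connected)
    (hsp : SeriesParallel G)
    (hnocc : ¬ ∃ K : Set V, (∀ u ∈ K, ∀ v ∈ K, u ≠ v → G.Adj u v) ∧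
      ∃ a b : V, a ∉ K ∧ b ∉ K ∧ ∀ W : G.Walk a b, ∃ c ∈ W.support, c ∈ K)
    (x y : V) (hxy : x = y ∨ G.Adj x y)
    (hdeg2 : ∀ v : V, G.degree v = 2 →
      v ∈ insert x (G.neighborSet x) ∪ insert y (G.neighborSet y))
    (hcycdeg2 : ∀ (r : V) (C : G.Walk r r), C.IsCycle →
      ∃ u v : V, u ∈ C.support ∧ v ∈ C.support ∧ u ≠ v ∧
        G.degree u = 2 ∧ G.degree v = 2)
    (hnbrdeg : ∀ v ∈ (insert x (G.neighborSet x) ∪ insert y (G.neighborSet y)) \ {x, y},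
      G.degree v = 2)
    (hstable : ∀ u ∈ (insert x (G.neighborSet x) ∪ insert y (G.neighborSet y)) \ {x, y},
      ∀ v ∈ (insert x (G.neighborSet x) ∪ insert y (G.neighborSet y)) \ {x, y},
      ¬ G.Adj u v) :
    (G.induce ((insert x (G.neighborSet x) ∪ insert y (G.neighborSet y))ᶜ)).IsTree :=
  stmt_19_general G htf hcard hnocc x y hxy hdeg2 hcycdeg2 hnbrdeg hstable
end
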